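/- arXiv:0708.4409 — 2 statements merged into one kernel-verified Lean document; each statement's English description precedes it below -/
import Mathlib

section
/- Let A be a finite alphabet with a total order <, let z ∈ A, and let w, w' be finite words with w' nonempty such that w = ψ_z(w')z (so w ends with the letter z). Then: if min(w) begins with z, min(w) = ψ_z(min(w'))z; otherwise, min(w) = z^{-1}ψ_z(min(w'))z, i.e., min(w) is obtained from ψ_z(min(w'))z by deleting its first letter z. -/
/-- The prefix of length `k` of an infinite word `t`. -/
def prefixList {A : Type*} (t : ℕ → A) (k : ℕ) : List A := (List.range k).map t

/-- `u` occurs as a factor of the infinite word `t` at position `i`. -/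
def FactorAt {A : Type*} (t : ℕ → A) (u : List A) (i : ℕ) : Prop :=
  u = (List.range u.length).map (fun j => t (i + j))

/-- `u` is a (finite) factor of the infinite word `t`. -/
def IsFactorInf {A : Type*} (t : ℕ → A) (u : List A) : Prop := ∃ i, FactorAt t u i

/-- An infinite word is recurrent if each of its factors occurs infinitely often. -/
def Recurrent {A : Type*} (t : ℕ → A) : Prop :=
  ∀ u, IsFactorInf t u → ∀ N, ∃ i, N ≤ i ∧ FactorAt t u i

/-- `u` is a right special factor of `t`. -/
def RightSpecial {A : Type*} (t : ℕ → A) (u : List A) : Prop :=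
  ∃ a b : A, a ≠ b ∧ IsFactorInf t (u ++ [a]) ∧ IsFactorInf t (u ++ [b])

/-- `u` is a left special factor of `t`. -/
def LeftSpecial {A : Type*} (t : ℕ → A) (u : List A) : Prop :=
  ∃ a b : A, a ≠ b ∧ IsFactorInf t (a :: u) ∧ IsFactorInf t (b :: u)

/-- An infinite word is episturmian if its set of factors is closed under reversal
and it has at most one right special factor of each length. -/
def Episturmian {A : Type*} (t : ℕ → A) : Prop :=
  (∀ u, IsFactorInf t u → IsFactorInf t u.reverse) ∧
  (∀ u v, RightSpecial t u → RightSpecial t v → u.length = v.length → u = v)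

/-- A standard episturmian word: episturmian with all left special factors prefixes. -/
def StdEpisturmian {A : Type*} (t : ℕ → A) : Prop :=
  Episturmian t ∧ ∀ u, LeftSpecial t u → u = prefixList t u.length

/-- A finite word is finite episturmian if it is a factor of some episturmian infinite word. -/
def FiniteEpisturmian {A : Type*} (w : List A) : Prop :=
  ∃ t : ℕ → A, Episturmian t ∧ IsFactorInf t w

/-- An acceptable pair: a strict total order `r` on `A` together with a letter `a`
that is minimal for `r`. -/
def AcceptablePair {A : Type*} (r : A → A → Prop) (a : A) : Prop :=
  IsStrictTotalOrder A r ∧ ∀ b, b ≠ a → r a b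

/-- Non-strict lexicographic order on finite words induced by the order `r` on letters. -/
def listLe {A : Type*} (r : A → A → Prop) (u v : List A) : Prop := u = v ∨ List.Lex r u v

/-- Non-strict lexicographic order on infinite words induced by the order `r` on letters. -/
def infLe {A : Type*} (r : A → A → Prop) (x y : ℕ → A) : Prop :=
  x = y ∨ ∃ i, (∀ j, j < i → x j = y j) ∧ r (x i) (y i)

/-- `m` is the lexicographically smallest factor of the finite word `w` of length `k`. -/
def IsMinFacLen {A : Type*} (r : A → A → Prop) (w : List A) (k : ℕ) (m : List A) : Prop :=
  m <:+: w ∧ m.length = k ∧ ∀ u, u <:+: w → u.length = k → listLe r m u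

/-- `m` is the lexicographically greatest factor of the finite word `w` of length `k`. -/
def IsMaxFacLen {A : Type*} (r : A → A → Prop) (w : List A) (k : ℕ) (m : List A) : Prop :=
  m <:+: w ∧ m.length = k ∧ ∀ u, u <:+: w → u.length = k → listLe r u m

/-- `m = min(w)`: for each `j ≤ |m|` the prefix of `m` of length `j` is `min(w|j)`,
and `|m|` is maximal with this chain property. -/
def IsMinFin {A : Type*} (r : A → A → Prop) (w m : List A) : Prop :=
  m ≠ [] ∧
  (∀ j, j ≤ m.length → IsMinFacLen r w j (m.take j)) ∧
  (∀ m', IsMinFacLen r w (m.length + 1) m' → ¬ m <+: m')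

/-- `m = max(w)` (finite word version). -/
def IsMaxFin {A : Type*} (r : A → A → Prop) (w m : List A) : Prop :=
  m ≠ [] ∧
  (∀ j, j ≤ m.length → IsMaxFacLen r w j (m.take j)) ∧
  (∀ m', IsMaxFacLen r w (m.length + 1) m' → ¬ m <+: m')

/-- `m = min(t)` for an infinite word `t`: each prefix of `m` is the lexicographically
smallest factor of `t` of its length. -/
def IsMinInf {A : Type*} (r : A → A → Prop) (t m : ℕ → A) : Prop :=
  ∀ k, IsFactorInf t (prefixList m k) ∧
    ∀ u, IsFactorInf t u → u.length = k → listLe r (prefixList m k) u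

/-- `m = max(t)` for an infinite word `t`. -/
def IsMaxInf {A : Type*} (r : A → A → Prop) (t m : ℕ → A) : Prop :=
  ∀ k, IsFactorInf t (prefixList m k) ∧
    ∀ u, IsFactorInf t u → u.length = k → listLe r u (prefixList m k)

/-- Prepend a letter to an infinite word. -/
def consInf {A : Type*} (a : A) (t : ℕ → A) : ℕ → A
  | 0 => a
  | n + 1 => t n

/-- Prepend a finite word to an infinite word. -/
def wordAppend {A : Type*} (v : List A) (t : ℕ → A) : ℕ → A :=
  fun n => if h : n < v.length then v.get ⟨n, h⟩ else t (n - v.length)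

/-- The pure epistandard morphism `ψ_z` on finite words: it fixes `z` and sends
each letter `x ≠ z` to `zx`. -/
def psiW {A : Type*} [DecidableEq A] (z : A) (w : List A) : List A :=
  (w.map (fun x => if x = z then [z] else [z, x])).flatten

/-- The finite word `u` is a prefix of the infinite word `t`. -/
def IsPrefixInf {A : Type*} (u : List A) (t : ℕ → A) : Prop := u = prefixList t u.length

/-- `y = f(t)`: the infinite word `y` is the image of the infinite word `t` under the
(non-erasing) morphism `f`, acting letter by letter. -/
def IsMorphImage {A : Type*} (f : List A → List A) (t y : ℕ → A) : Prop :=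
  ∀ k, IsPrefixInf (f (prefixList t k)) y

/-- Pure epistandard morphisms: finite compositions of the morphisms `ψ_a`. -/
inductive PureEpistandard {A : Type*} [DecidableEq A] : (List A → List A) → Prop
  | id : PureEpistandard _root_.id
  | comp (a : A) (f : List A → List A) : PureEpistandard f →
      PureEpistandard (fun w => psiW a (f w))

/-- An infinite word is episkew if it is non-recurrent and all of its factors
are finite episturmian. -/
def Episkew {A : Type*} (t : ℕ → A) : Prop :=
  ¬ Recurrent t ∧ ∀ u, IsFactorInf t u → FiniteEpisturmian u

/- Two-letter (Bool) notions: `false` plays the role of `a`, `true` of `b`,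
with the order `false < true`. -/

/-- A finite binary word is balanced. -/
def BalancedList (w : List Bool) : Prop :=
  ∀ u v : List Bool, u <:+: w → v <:+: w → u.length = v.length →
    |(u.count true : ℤ) - (v.count true : ℤ)| ≤ 1

/-- An infinite binary word is balanced. -/
def BalancedInf (t : ℕ → Bool) : Prop :=
  ∀ u v : List Bool, IsFactorInf t u → IsFactorInf t v → u.length = v.length →
    |(u.count true : ℤ) - (v.count true : ℤ)| ≤ 1

/-- The Sturmian word of slope `α` and intercept `ρ` defined via floors. -/
def SturmianFloor (α ρ : ℝ) (t : ℕ → Bool) : Prop :=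
  ∀ n : ℕ, t n = true ↔ ⌊((n : ℝ) + 1) * α + ρ⌋ ≠ ⌊(n : ℝ) * α + ρ⌋

/-- The Sturmian word of slope `α` and intercept `ρ` defined via ceilings. -/
def SturmianCeil (α ρ : ℝ) (t : ℕ → Bool) : Prop :=
  ∀ n : ℕ, t n = true ↔ ⌈((n : ℝ) + 1) * α + ρ⌉ ≠ ⌈(n : ℝ) * α + ρ⌉

/-- Aperiodic Sturmian words: those of irrational slope. -/
def IsAperiodicSturmian (t : ℕ → Bool) : Prop :=
  ∃ α ρ : ℝ, α ∈ Set.Icc (0 : ℝ) 1 ∧ ρ ∈ Set.Icc (0 : ℝ) 1 ∧ Irrational α ∧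
    (SturmianFloor α ρ t ∨ SturmianCeil α ρ t)

/-- Standard Sturmian words: those with `ρ = α`. -/
def IsStandardSturmian (t : ℕ → Bool) : Prop :=
  ∃ α : ℝ, α ∈ Set.Icc (0 : ℝ) 1 ∧ (SturmianFloor α α t ∨ SturmianCeil α α t)

/-- A fine infinite binary word: `(min(t), max(t)) = (a·s, b·s)` for some infinite word `s`. -/
def FineBool (t : ℕ → Bool) : Prop :=
  ∃ s : ℕ → Bool, IsMinInf (· < ·) t (consInf false s) ∧ IsMaxInf (· < ·) t (consInf true s)

/-- A periodic infinite word. -/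
def PeriodicInf {A : Type*} (t : ℕ → A) : Prop := ∃ p, 0 < p ∧ ∀ i, t (i + p) = t i

/-- An ultimately periodic infinite word. -/
def UltPeriodicInf {A : Type*} (t : ℕ → A) : Prop :=
  ∃ p, 0 < p ∧ ∃ m, ∀ i, m ≤ i → t (i + p) = t i

/-!
Conjugating `ψ_z` by `z` gives the morphism `φ = psiConj z` with `φ(z) = z` and `φ(x) = xz`
for `x ≠ z`, so that `ψ_z(u)z = z φ(u)`. Every block of `φ` begins with its own letter, hence
`φ` is monotone for `TruncLe`, the lexicographic comparison of two words on their common length,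
and `φ(m)d` can only be a prefix of `φ(s)` if `md` is a prefix of `s`. These two facts suffice
because a nonempty factor `m` of a word is its `min` exactly when `m` is `TruncLe`-below every
suffix and no word `md` is a factor. The suffixes of `w = z φ(w')` are the words `φ(s)` and
`φ(zs)` with `s` a suffix of `w'`. Writing `c` for the first letter of `m' = min(w')`, i.e. the
least letter of `w'`, checking against these suffixes gives `min(w) = φ(m')` if `c < z`, and
`min(w) = φ(zm') = ψ_z(m')z` otherwise.
-/

section MinFactor

variable {A : Type*} {r : A → A → Prop}

theorem listLe_cons_iff [Std.Irrefl r] {a : A} {x y : List A} :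
    listLe r (a :: x) (a :: y) ↔ listLe r x y := by
  simp only [listLe, List.cons.injEq, true_and, List.lex_cons_iff]

theorem listLe_singleton_iff {a b : A} : listLe r [a] [b] ↔ a = b ∨ r a b := by
  simp [listLe]

theorem listLe.append_left (l : List A) {x y : List A} (h : listLe r x y) :
    listLe r (l ++ x) (l ++ y) :=
  h.imp (congrArg _) (List.Lex.append_left r · l)

theorem listLe.antisymm [Std.Asymm r] {x y : List A} (hxy : listLe r x y) (hyx : listLe r y x) :
    x = y := by
  rcases hxy with rfl | hxy
  · rfl
  · rcases hyx with rfl | hyx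
    · rfl
    · exact absurd hyx (asymm hxy)

theorem List.Lex.append_of_length_eq {x y : List A} (h : List.Lex r x y)
    (hl : x.length = y.length) (u v : List A) : List.Lex r (x ++ u) (y ++ v) := by
  induction h with
  | nil => simp at hl
  | rel h => exact .rel h
  | cons _ ih => exact .cons (ih (by simpa using hl))

def TruncLe (r : A → A → Prop) (x y : List A) : Prop :=
  ∀ j, j ≤ x.length → j ≤ y.length → listLe r (x.take j) (y.take j)

theorem truncLe_nil_left (y : List A) : TruncLe r [] y := fun j hj _ => by
  rw [Nat.le_zero.1 hj]
  exact Or.inl rfl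

theorem truncLe_nil_right (x : List A) : TruncLe r x [] := fun j _ hj => by
  rw [Nat.le_zero.1 hj]
  exact Or.inl rfl

theorem truncLe_cons_cons_of_rel {a b : A} (h : r a b) (x y : List A) :
    TruncLe r (a :: x) (b :: y) := fun
  | 0, _, _ => Or.inl rfl
  | _ + 1, _, _ => Or.inr (.rel h)

theorem TruncLe.cons (a : A) {x y : List A} (h : TruncLe r x y) : TruncLe r (a :: x) (a :: y) := fun
  | 0, _, _ => Or.inl rfl
  | j + 1, hx, hy => by
    simp only [List.take_succ_cons]
    exact (h j (by simpa using hx) (by simpa using hy)).imp (congrArg _) .cons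

theorem TruncLe.of_cons [Std.Irrefl r] {a : A} {x y : List A} (h : TruncLe r (a :: x) (a :: y)) :
    TruncLe r x y := fun j hx hy => by
  simpa [listLe_cons_iff] using h (j + 1) (by simpa using hx) (by simpa using hy)

theorem TruncLe.head {a b : A} {x y : List A} (h : TruncLe r (a :: x) (b :: y)) :
    a = b ∨ r a b :=
  listLe_singleton_iff.1 (h 1 (by simp) (by simp))

theorem IsMinFacLen.unique [Std.Asymm r] {w m₁ m₂ : List A} {k : ℕ}
    (h₁ : IsMinFacLen r w k m₁) (h₂ : IsMinFacLen r w k m₂) : m₁ = m₂ :=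
  (h₁.2.2 m₂ h₂.1 h₂.2.1).antisymm (h₂.2.2 m₁ h₁.1 h₁.2.1)

theorem IsMinFacLen.append_singleton {w m : List A} {d : A} (hm : IsMinFacLen r w m.length m)
    (hd : m ++ [d] <:+: w) (hle : ∀ e, m ++ [e] <:+: w → listLe r [d] [e]) :
    IsMinFacLen r w (m.length + 1) (m ++ [d]) := by
  refine ⟨hd, by simp, fun v hv hvlen => ?_⟩
  obtain ⟨e, he⟩ : ∃ e, v.drop m.length = [e] := List.length_eq_one_iff.1 (by simp [hvlen])
  have hv' : v = v.take m.length ++ [e] := by rw [← he, List.take_append_drop]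
  rw [hv'] at hv ⊢
  rcases hm.2.2 _ ((List.prefix_append _ _).isInfix.trans hv) (by simp [hvlen]) with heq | hlex
  · rw [← heq] at hv ⊢
    exact (hle e hv).append_left m
  · exact Or.inr (hlex.append_of_length_eq (by simp [hvlen]) _ _)

namespace IsMinFin

variable {w m : List A}

theorem isInfix (h : IsMinFin r w m) : m <:+: w := by
  simpa using (h.2.1 m.length le_rfl).1

theorem truncLe_of_infix (h : IsMinFin r w m) {t : List A} (ht : t <:+: w) : TruncLe r m t :=
  fun j hjm hjt => (h.2.1 j hjm).2.2 _ ((List.take_prefix j t).isInfix.trans ht) (by simp [hjt])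

theorem head_le_of_mem {c : A} {t : List A} (h : IsMinFin r w (c :: t)) {b : A} (hb : b ∈ w) :
    c = b ∨ r c b :=
  listLe_singleton_iff.1 <| by
    simpa using (h.2.1 1 (by simp)).2.2 [b] ((List.singleton_infix_iff b w).2 hb) rfl

theorem not_append_infix [IsStrictTotalOrder A r] (h : IsMinFin r w m) (d : A) :
    ¬ m ++ [d] <:+: w := by
  intro hd
  let S := {e | m ++ [e] <:+: w}
  have hS : S.Finite :=
    (List.finite_toSet w).subset fun e he => he.subset (by simp)
  obtain ⟨⟨d₀, hd₀⟩, -, hmin⟩ :=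
    WellFounded.has_min (hS.wellFoundedOn (r := r)) Set.univ ⟨⟨d, hd⟩, trivial⟩
  have hle : ∀ e, m ++ [e] <:+: w → listLe r [d₀] [e] := fun e he => by
    rcases trichotomous (r := r) d₀ e with hlt | rfl | hgt
    · exact Or.inr (.rel hlt)
    · exact Or.inl rfl
    · exact absurd hgt (hmin ⟨e, he⟩ trivial)
  have hmin₀ : IsMinFacLen r w m.length m := by simpa using h.2.1 m.length le_rfl
  exact h.2.2 _ (hmin₀.append_singleton hd₀ hle) (List.prefix_append _ _)

theorem unique [Std.Asymm r] {m₁ m₂ : List A} (h₁ : IsMinFin r w m₁)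
    (h₂ : IsMinFin r w m₂) : m₁ = m₂ := by
  wlog hl : m₁.length ≤ m₂.length generalizing m₁ m₂
  · exact (this h₂ h₁ (le_of_not_ge hl)).symm
  have hpre : m₁ <+: m₂ := List.prefix_iff_eq_take.2 <|
    IsMinFacLen.unique (by simpa using h₁.2.1 _ le_rfl) (h₂.2.1 _ hl)
  rcases hl.eq_or_lt with heq | hlt
  · exact hpre.eq_of_length heq
  · exact absurd (List.prefix_take_iff.2 ⟨hpre, by omega⟩) (h₁.2.2 _ (h₂.2.1 _ hlt))

end IsMinFin

theorem isMinFin_of_suffix {w m : List A} (hne : m ≠ []) (hm : m <:+: w)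
    (hle : ∀ t, t <:+ w → TruncLe r m t) (hext : ∀ d, ¬ m ++ [d] <:+: w) :
    IsMinFin r w m := by
  refine ⟨hne, fun j hj => ⟨(List.take_prefix j m).isInfix.trans hm, by simp [hj],
    fun u hu hlen => ?_⟩, fun μ hμ ⟨t, ht⟩ => ?_⟩
  · obtain ⟨t, hut, ht⟩ := List.infix_iff_prefix_suffix.1 hu
    have := hle t ht j hj (hlen ▸ hut.length_le)
    rw [← hlen] at this ⊢
    rwa [← List.prefix_iff_eq_take.1 hut] at this
  · obtain ⟨d, rfl⟩ :=
      List.length_eq_one_iff.1 (by simpa [hμ.2.1] using congrArg List.length ht)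
    exact hext d (ht ▸ hμ.1)

end MinFactor

section Conjugate

variable {A : Type*} [DecidableEq A] {r : A → A → Prop} {z : A}

def psiConj (z : A) (u : List A) : List A :=
  u.flatMap fun x => if x = z then [z] else [x, z]

@[simp]
theorem psiConj_nil : psiConj z [] = [] := rfl

theorem psiConj_cons (a : A) (u : List A) :
    psiConj z (a :: u) = a :: if a = z then psiConj z u else z :: psiConj z u := by
  by_cases h : a = z <;> simp [psiConj, h]

@[simp]
theorem psiConj_append (u v : List A) : psiConj z (u ++ v) = psiConj z u ++ psiConj z v := by
  simp [psiConj]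

theorem psiW_append_singleton (z : A) (u : List A) : psiW z u ++ [z] = z :: psiConj z u := by
  induction u with
  | nil => rfl
  | cons a u ih => by_cases h : a = z <;> simp_all [psiW, psiConj]

theorem psiConj_prefix_psiConj {u v : List A} (h : u <+: v) : psiConj z u <+: psiConj z v := by
  obtain ⟨t, rfl⟩ := h
  exact ⟨psiConj z t, (psiConj_append _ _).symm⟩

theorem psiConj_suffix_cons_psiConj {s w' : List A} (hs : s <:+ w') :
    psiConj z s <:+ z :: psiConj z w' ∧ psiConj z (z :: s) <:+ z :: psiConj z w' := by
  obtain ⟨p, rfl⟩ := hs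
  have h : psiConj z (z :: s) <:+ z :: psiConj z (p ++ s) :=
    ⟨psiW z p, by simp [psiConj_cons, ← List.cons_append, ← psiW_append_singleton]⟩
  refine ⟨List.IsSuffix.trans ?_ h, h⟩
  simp [psiConj_cons]

theorem exists_suffix_of_suffix_cons_psiConj : ∀ {w' t : List A}, t <:+ z :: psiConj z w' →
    ∃ s, s <:+ w' ∧ (t = psiConj z s ∨ t = psiConj z (z :: s))
  | [], t, ht => by
    refine ⟨[], List.suffix_refl _, ?_⟩
    simpa [List.suffix_cons_iff, psiConj_cons, or_comm] using ht
  | a :: w', t, ht => by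
    have lift : ∀ {t}, t <:+ z :: psiConj z w' →
        ∃ s, s <:+ a :: w' ∧ (t = psiConj z s ∨ t = psiConj z (z :: s)) := fun ht =>
      let ⟨s, hs, h⟩ := exists_suffix_of_suffix_cons_psiConj ht
      ⟨s, hs.trans (List.suffix_cons _ _), h⟩
    rw [psiConj_cons, List.suffix_cons_iff] at ht
    rcases ht with rfl | ht
    · refine ⟨a :: w', List.suffix_refl _, Or.inr ?_⟩
      rw [psiConj_cons, if_pos rfl, psiConj_cons]
    split_ifs at ht with haz
    · exact lift (haz ▸ ht)
    · rcases List.suffix_cons_iff.1 ht with rfl | ht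
      · exact ⟨a :: w', List.suffix_refl _, Or.inl (by rw [psiConj_cons, if_neg haz])⟩
      · exact lift ht

theorem append_singleton_prefix_of_psiConj : ∀ {m s : List A} {d : A},
    psiConj z m ++ [d] <+: psiConj z s → m ++ [d] <+: s
  | _, [], _, h => by simpa using h.length_le
  | [], b :: s, d, h => by
    rw [psiConj_cons] at h
    exact List.cons_prefix_cons.2 ⟨(List.cons_prefix_cons.1 h).1, List.nil_prefix⟩
  | a :: m, b :: s, d, h => by
    rw [psiConj_cons, psiConj_cons, List.cons_append, List.cons_prefix_cons] at h
    obtain ⟨rfl, h⟩ := h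
    refine List.cons_prefix_cons.2 ⟨rfl, append_singleton_prefix_of_psiConj ?_⟩
    split_ifs at h
    · exact h
    · exact (List.cons_prefix_cons.1 h).2

theorem TruncLe.psiConj [Std.Irrefl r] :
    ∀ {p q : List A}, TruncLe r p q → TruncLe r (psiConj z p) (psiConj z q)
  | [], _, _ => truncLe_nil_left _
  | _ :: _, [], _ => truncLe_nil_right _
  | a :: p, b :: q, h => by
    rw [psiConj_cons, psiConj_cons]
    rcases h.head with rfl | hab
    · have ih := h.of_cons.psiConj
      split_ifs
      · exact ih.cons a
      · exact (ih.cons z).cons a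
    · exact truncLe_cons_cons_of_rel hab _ _

theorem isMinFin_cons_psiConj_of_suffixes [Std.Irrefl r] {w' M : List A} (hne : M ≠ [])
    (hinf : ∃ s, s <:+ w' ∧ (M <+: s ∨ M <+: z :: s))
    (hle : ∀ s, s <:+ w' → TruncLe r M s ∧ TruncLe r M (z :: s))
    (hext : ∀ s d, s <:+ w' → ¬ M ++ [d] <+: s ∧ ¬ M ++ [d] <+: z :: s) :
    IsMinFin r (z :: psiConj z w') (psiConj z M) := by
  refine isMinFin_of_suffix ?_ ?_ ?_ ?_
  · obtain ⟨c, t, rfl⟩ := List.exists_cons_of_ne_nil hne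
    simp [psiConj_cons]
  · obtain ⟨s, hs, hM | hM⟩ := hinf
    · exact (psiConj_prefix_psiConj hM).isInfix.trans (psiConj_suffix_cons_psiConj hs).1.isInfix
    · exact (psiConj_prefix_psiConj hM).isInfix.trans (psiConj_suffix_cons_psiConj hs).2.isInfix
  · intro t ht
    obtain ⟨s, hs, rfl | rfl⟩ := exists_suffix_of_suffix_cons_psiConj ht
    · exact (hle s hs).1.psiConj
    · exact (hle s hs).2.psiConj
  · intro d hd
    obtain ⟨t, hdt, ht⟩ := List.infix_iff_prefix_suffix.1 hd
    obtain ⟨s, hs, rfl | rfl⟩ := exists_suffix_of_suffix_cons_psiConj ht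
    · exact (hext s d hs).1 (append_singleton_prefix_of_psiConj hdt)
    · exact (hext s d hs).2 (append_singleton_prefix_of_psiConj hdt)

theorem isMinFin_psiConj_of_head_rel [IsStrictTotalOrder A r] {w' t : List A} {c : A}
    (hm : IsMinFin r w' (c :: t)) (hc : r c z) :
    IsMinFin r (z :: psiConj z w') (psiConj z (c :: t)) := by
  obtain ⟨s₀, hpre, hs₀⟩ := List.infix_iff_prefix_suffix.1 hm.isInfix
  refine isMinFin_cons_psiConj_of_suffixes (List.cons_ne_nil _ _) ⟨s₀, hs₀, Or.inl hpre⟩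
    (fun s hs => ⟨hm.truncLe_of_infix hs.isInfix, truncLe_cons_cons_of_rel hc _ _⟩)
    (fun s d hs => ⟨fun h => hm.not_append_infix d (h.isInfix.trans hs.isInfix), fun h => ?_⟩)
  exact ne_of_irrefl hc (List.cons_prefix_cons.1 h).1

theorem isMinFin_psiConj_cons [IsStrictTotalOrder A r] {w' m : List A}
    (hm : IsMinFin r w' m) (hz : ∀ b ∈ w', b = z ∨ r z b) :
    IsMinFin r (z :: psiConj z w') (psiConj z (z :: m)) := by
  obtain ⟨s₀, hpre, hs₀⟩ := List.infix_iff_prefix_suffix.1 hm.isInfix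
  have hext : ∀ s d, s <:+ w' → ¬ m ++ [d] <+: s := fun s d hs h =>
    hm.not_append_infix d (h.isInfix.trans hs.isInfix)
  refine isMinFin_cons_psiConj_of_suffixes (List.cons_ne_nil _ _)
    ⟨s₀, hs₀, Or.inr (List.cons_prefix_cons.2 ⟨rfl, hpre⟩)⟩
    (fun s hs => ⟨?_, (hm.truncLe_of_infix hs.isInfix).cons z⟩)
    (fun s d hs => ⟨?_, fun h => hext s d hs (List.cons_prefix_cons.1 h).2⟩)
  · cases s with
    | nil => exact truncLe_nil_right _
    | cons b s =>
      rcases hz b (hs.subset List.mem_cons_self) with rfl | hzb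
      · exact (hm.truncLe_of_infix ((List.suffix_cons _ _).trans hs).isInfix).cons _
      · exact truncLe_cons_cons_of_rel hzb _ _
  · cases s with
    | nil => simp
    | cons b s =>
      exact fun h => hext s d ((List.suffix_cons _ _).trans hs) (List.cons_prefix_cons.1 h).2

end Conjugate

theorem min_psi_ending_general {A : Type*} [DecidableEq A]
    (r : A → A → Prop) (hr : IsStrictTotalOrder A r) (z : A) (w w' : List A)
    (hw : w = psiW z w' ++ [z]) :
    ∀ m m' : List A, IsMinFin r w m → IsMinFin r w' m' →
      (m.head? = some z → m = psiW z m' ++ [z]) ∧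
      (m.head? ≠ some z → z :: m = psiW z m' ++ [z]) := by
  intro m m' hm hm'
  rw [hw, psiW_append_singleton] at hm
  rw [psiW_append_singleton]
  obtain ⟨c, t, rfl⟩ := List.exists_cons_of_ne_nil hm'.1
  by_cases hcz : r c z
  · obtain rfl := hm.unique (isMinFin_psiConj_of_head_rel hm' hcz)
    simp [psiConj_cons, ne_of_irrefl hcz]
  · have hz : ∀ b ∈ w', b = z ∨ r z b := fun b hb => by
      rcases trichotomous (r := r) c z with hlt | rfl | hzc
      · exact absurd hlt hcz
      · exact (hm'.head_le_of_mem hb).imp_left Eq.symm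
      · exact .inr <| (hm'.head_le_of_mem hb).elim (· ▸ hzc) (_root_.trans hzc)
    obtain rfl := hm.unique (isMinFin_psiConj_cons hm' hz)
    simp [psiConj_cons]

/-- If `w = ψ_z(w')z` with `w'` nonempty (so `w` ends with `z`), then
`min(w) = ψ_z(min(w'))z` if `min(w)` begins with `z`, and `min(w) = z⁻¹ψ_z(min(w'))z`
otherwise. -/
theorem min_psi_ending {A : Type*} [Fintype A] [DecidableEq A]
    (r : A → A → Prop) (hr : IsStrictTotalOrder A r) (z : A) (w w' : List A)
    (hw' : w' ≠ []) (hw : w = psiW z w' ++ [z]) :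
    ∀ m m' : List A, IsMinFin r w m → IsMinFin r w' m' →
      (m.head? = some z → m = psiW z m' ++ [z]) ∧
      (m.head? ≠ some z → z :: m = psiW z m' ++ [z]) :=
  min_psi_ending_general r hr z w w' hw
end

section
/- Let t be a non-recurrent infinite word with Alph(t) = A all of whose factors are finite episturmian. Then there exist an infinite sequence (t^(i))_{i≥0} of non-recurrent infinite words and letters x_1, x_2, x_3, … in A such that t^(0) = t and, for every i ≥ 1, t'^(i−1) = ψ_{x_i}(t^(i)), where t'^(i−1) = t^(i−1) if t^(i−1) begins with the letter x_i, and t'^(i−1) = x_i·t^(i−1) otherwise. -/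
/-!
A word `t` all of whose factors are finite episturmian has a *separating letter* `x`: one
that occurs in every factor of length two. Indeed an episturmian word has one (its only
right special letter, or either letter of an alternating word), and a single prefix of `t`
containing all its factors of length two lies in an episturmian word. If `t` is
non-recurrent, two distinct separating letters would make `t` alternate between them, so
`x` is unique and separates every episturmian word containing a long enough prefix of `t`;
such a word can be chosen to begin with `x`.

A word starting with `x` and separated by `x` cuts into blocks `x` and `xy` (`y ≠ x`), i.e.
it is `ψ_x(s)` for a unique `s`. For a factor `u` of `s`, the factor `ψ_x(u)x` of `t` lies in
an episturmian word `e` starting with `x` and separated by `x`, and the `ψ_x`-preimage of `e`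
is again episturmian (reversal commutes with `v ↦ ψ_x(v)x`, and right special factors lift)
and contains `u`. Recurrence of `s` would give recurrence of `t`. If `t` does not start with
`x`, the word `x·t` has the same properties, and iterating gives the sequence.
-/

section

variable {A : Type*}

def wordSeg (t : ℕ → A) (i n : ℕ) : List A := (List.range n).map fun j => t (i + j)

@[simp] lemma wordSeg_length (t : ℕ → A) (i n : ℕ) : (wordSeg t i n).length = n := by
  simp [wordSeg]

@[simp] lemma wordSeg_zero (t : ℕ → A) (i : ℕ) : wordSeg t i 0 = [] := rfl

@[simp] lemma wordSeg_getElem (t : ℕ → A) (i n j : ℕ) (h : j < (wordSeg t i n).length) :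
    (wordSeg t i n)[j] = t (i + j) := by
  simp [wordSeg]

lemma wordSeg_add (t : ℕ → A) (i m n : ℕ) :
    wordSeg t i (m + n) = wordSeg t i m ++ wordSeg t (i + m) n := by
  simp only [wordSeg, List.range_add, List.map_append, List.map_map]
  congr 1
  ext j
  simp [Nat.add_assoc]

lemma wordSeg_succ (t : ℕ → A) (i n : ℕ) :
    wordSeg t i (n + 1) = wordSeg t i n ++ [t (i + n)] := by
  rw [wordSeg_add]
  simp [wordSeg]

lemma wordSeg_infix (t : ℕ → A) {i n L : ℕ} (h : i + n ≤ L) :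
    wordSeg t i n <:+: wordSeg t 0 L := by
  obtain ⟨r, rfl⟩ := Nat.exists_eq_add_of_le h
  rw [wordSeg_add, wordSeg_add, Nat.zero_add]
  exact List.infix_append _ _ _

lemma wordSeg_prefix (t : ℕ → A) (i : ℕ) {m n : ℕ} (h : m ≤ n) :
    wordSeg t i m <+: wordSeg t i n := by
  obtain ⟨r, rfl⟩ := Nat.exists_eq_add_of_le h
  rw [wordSeg_add]
  exact List.prefix_append _ _

lemma prefixList_eq_wordSeg (t : ℕ → A) (k : ℕ) : prefixList t k = wordSeg t 0 k := by
  simp [prefixList, wordSeg]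

lemma factorAt_iff_eq_wordSeg {t : ℕ → A} {u : List A} {i : ℕ} :
    FactorAt t u i ↔ u = wordSeg t i u.length := Iff.rfl

lemma FactorAt.getElem {t : ℕ → A} {u : List A} {i : ℕ} (h : FactorAt t u i)
    (j : ℕ) (hj : j < u.length) : u[j] = t (i + j) := by
  rw [List.getElem_of_eq h hj]
  simp

lemma factorAt_of_getElem {t : ℕ → A} {u : List A} {i : ℕ}
    (h : ∀ j (hj : j < u.length), u[j] = t (i + j)) : FactorAt t u i :=
  List.ext_getElem (by simp) fun j h₁ _ => by simpa using h j h₁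

lemma factorAt_wordSeg (t : ℕ → A) (i n : ℕ) : FactorAt t (wordSeg t i n) i :=
  factorAt_of_getElem (by simp)

lemma isFactorInf_wordSeg (t : ℕ → A) (i n : ℕ) : IsFactorInf t (wordSeg t i n) :=
  ⟨i, factorAt_wordSeg t i n⟩

@[simp] lemma factorAt_nil (t : ℕ → A) (i : ℕ) : FactorAt t [] i := rfl

lemma factorAt_append {t : ℕ → A} {u v : List A} {i : ℕ} :
    FactorAt t (u ++ v) i ↔ FactorAt t u i ∧ FactorAt t v (i + u.length) := by
  simp only [factorAt_iff_eq_wordSeg, List.length_append, wordSeg_add]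
  constructor
  · intro h
    exact List.append_inj h (by simp)
  · rintro ⟨h₁, h₂⟩
    rw [← h₁, ← h₂]

lemma factorAt_cons {t : ℕ → A} {c : A} {u : List A} {i : ℕ} :
    FactorAt t (c :: u) i ↔ c = t i ∧ FactorAt t u (i + 1) := by
  rw [← List.singleton_append, factorAt_append]
  simp [factorAt_iff_eq_wordSeg, wordSeg, List.range_one]

lemma FactorAt.of_prefix {t : ℕ → A} {u v : List A} {i : ℕ} (h : FactorAt t v i)
    (huv : u <+: v) : FactorAt t u i := by
  obtain ⟨s, rfl⟩ := huv
  exact (factorAt_append.mp h).1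

lemma IsFactorInf.of_infix {t : ℕ → A} {u v : List A} (h : IsFactorInf t v)
    (huv : u <:+: v) : IsFactorInf t u := by
  obtain ⟨i, hi⟩ := h
  obtain ⟨p, s, rfl⟩ := huv
  rw [List.append_assoc, factorAt_append] at hi
  exact ⟨i + p.length, (factorAt_append.mp hi.2).1⟩

lemma factorAt_succ_iff {s t : ℕ → A} (h : ∀ n, s (n + 1) = t n) {u : List A} {i : ℕ} :
    FactorAt s u (i + 1) ↔ FactorAt t u i := by
  simp only [factorAt_iff_eq_wordSeg, wordSeg, Nat.add_right_comm i 1, h]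

lemma isFactorInf_pair (t : ℕ → A) (n : ℕ) : IsFactorInf t [t n, t (n + 1)] :=
  ⟨n, by simp [factorAt_cons]⟩

lemma recurrent_of_forall_prefix {t : ℕ → A}
    (h : ∀ k N, ∃ m, N ≤ m ∧ FactorAt t (wordSeg t 0 k) m) : Recurrent t := by
  rintro u ⟨i, hi⟩ N
  obtain ⟨m, hm, hP⟩ := h (i + u.length) N
  rw [wordSeg_add, factorAt_append] at hP
  have hu : u = wordSeg t i u.length := hi
  refine ⟨m + i, by omega, ?_⟩
  rw [hu]
  simpa using hP.2

lemma recurrent_of_reverse_closed {t : ℕ → A}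
    (hrev : ∀ u, IsFactorInf t u → IsFactorInf t u.reverse) : Recurrent t := by
  have key : ∀ u i, FactorAt t u i → ∀ N, ∃ j, N ≤ j ∧ FactorAt t u.reverse j := by
    intro u i h N
    -- `u.reverse` occurs in the reversal of the prefix of length `i + |u| + N`, at least `N`
    -- letters after its start
    set P := i + u.length + N
    obtain ⟨j₀, hj₀⟩ := hrev _ (isFactorInf_wordSeg t 0 P)
    refine ⟨j₀ + (P - i - u.length), by omega, factorAt_of_getElem fun m hm => ?_⟩
    simp only [List.length_reverse] at hm
    have h₁ := h.getElem (u.length - 1 - m) (by omega)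
    have h₂ := hj₀.getElem (P - i - u.length + m) (by simp; omega)
    simp only [List.getElem_reverse, wordSeg_length, wordSeg_getElem] at h₁ h₂ ⊢
    rw [h₁, ← Nat.add_assoc] at *
    rw [← h₂]
    congr 1
    omega
  rintro u ⟨i, hi⟩ N
  obtain ⟨j, -, hj⟩ := key u i hi 0
  simpa using key u.reverse j hj N

lemma recurrent_of_period_two {t : ℕ → A} (hp : ∀ n, t (n + 2) = t n) : Recurrent t := by
  have hper : ∀ d n, t (n + 2 * d) = t n := by
    intro d
    induction d with
    | zero => simp
    | succ d ih => intro n; rw [Nat.mul_succ, ← Nat.add_assoc, hp, ih]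
  rintro u ⟨i, hi⟩ N
  refine ⟨i + 2 * N, by omega, factorAt_of_getElem fun j hj => ?_⟩
  rw [hi.getElem j hj, Nat.add_right_comm, hper]

lemma Episturmian.recurrent {t : ℕ → A} (ht : Episturmian t) : Recurrent t :=
  recurrent_of_reverse_closed ht.1

lemma Episturmian.of_isFactorInf_iff {s t : ℕ → A} (ht : Episturmian t)
    (hst : ∀ u, IsFactorInf s u ↔ IsFactorInf t u) : Episturmian s := by
  have hrs : ∀ u, RightSpecial s u ↔ RightSpecial t u := by simp [RightSpecial, hst]
  refine ⟨fun u hu => ?_, fun u v hu hv => ht.2 u v ((hrs u).1 hu) ((hrs v).1 hv)⟩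
  rw [hst] at hu ⊢
  exact ht.1 u hu

lemma Recurrent.isFactorInf_shift_iff {t : ℕ → A} (ht : Recurrent t) (u : List A) :
    IsFactorInf (fun n => t (n + 1)) u ↔ IsFactorInf t u := by
  constructor
  · rintro ⟨i, hi⟩
    exact ⟨i + 1, (factorAt_succ_iff fun _ => rfl).2 hi⟩
  · intro hu
    obtain ⟨j, hj, hju⟩ := ht u hu 1
    obtain ⟨i, rfl⟩ := Nat.exists_eq_add_of_le' hj
    exact ⟨i, (factorAt_succ_iff fun _ => rfl).1 hju⟩

def IsSeparating (x : A) (t : ℕ → A) : Prop := ∀ n, t n = x ∨ t (n + 1) = x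

lemma IsSeparating.of_pairs {x : A} {e t : ℕ → A} (hx : IsSeparating x e)
    (hpairs : ∀ n, IsFactorInf e [t n, t (n + 1)]) : IsSeparating x t := by
  intro n
  obtain ⟨i, hi⟩ := hpairs n
  simp only [factorAt_cons] at hi
  rw [hi.1, hi.2.1]
  exact hx i

lemma IsSeparating.eq_of_not_recurrent {x y : A} {t : ℕ → A} (hx : IsSeparating x t)
    (hy : IsSeparating y t) (ht : ¬ Recurrent t) : x = y := by
  by_contra hxy
  -- `t` alternates between `x` and `y`
  refine ht (recurrent_of_period_two fun n => ?_)
  have := hx n; have := hy n; have := hx (n + 1); have := hy (n + 1)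
  grind

lemma eq_ite_even_of_not_rightSpecial {t : ℕ → A}
    (hrev : ∀ u, IsFactorInf t u → IsFactorInf t u.reverse) {i : ℕ}
    (ha : ¬ RightSpecial t [t i]) (hb : ¬ RightSpecial t [t (i + 1)]) :
    ∀ k, t (i + k) = if Even k then t i else t (i + 1) := by
  have hsucc : ∀ {c d d'}, ¬ RightSpecial t [c] →
      IsFactorInf t [c, d] → IsFactorInf t [c, d'] → d = d' :=
    fun hc h h' => by_contra fun hne => hc ⟨_, _, hne, by simpa using h, by simpa using h'⟩
  have hba : IsFactorInf t [t (i + 1), t i] := by simpa using hrev _ (isFactorInf_pair t i)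
  intro k
  induction k with
  | zero => simp
  | succ k ih =>
    have hpair := isFactorInf_pair t (i + k)
    rw [ih] at hpair
    rcases Nat.even_or_odd k with hk | hk
    · rw [if_pos hk] at hpair
      simp [Nat.even_add_one, hk, ← Nat.add_assoc, hsucc ha hpair (isFactorInf_pair t i)]
    · rw [if_neg (Nat.not_even_iff_odd.2 hk)] at hpair
      simp [Nat.even_add_one, Nat.not_even_iff_odd.2 hk, ← Nat.add_assoc, hsucc hb hpair hba]

lemma Episturmian.exists_isSeparating {e : ℕ → A} (he : Episturmian e) :
    ∃ x, IsSeparating x e := by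
  by_cases hex : ∃ r, RightSpecial e [r]
  · obtain ⟨r, hr⟩ := hex
    refine ⟨r, fun n => ?_⟩
    by_contra! hne
    have hns : ∀ m, e m ≠ r → ¬ RightSpecial e [e m] := fun m hm h =>
      hm (by simpa using he.2 _ _ h hr rfl)
    have halt := eq_ite_even_of_not_rightSpecial he.1 (hns n hne.1) (hns (n + 1) hne.2)
    obtain ⟨c, -, -, hc, -⟩ := hr
    obtain ⟨m, hm, hmr⟩ := he.recurrent [r] (hc.of_infix ⟨[], [c], rfl⟩) n
    have hem : e m = r := ((factorAt_cons.mp hmr).1).symm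
    have h := halt (m - n)
    rw [Nat.add_sub_cancel' hm, hem] at h
    split_ifs at h
    exacts [hne.1 h.symm, hne.2 h.symm]
  · push Not at hex
    refine ⟨e 1, fun n => ?_⟩
    have halt := eq_ite_even_of_not_rightSpecial (i := 0) he.1 (hex _) (hex _)
    simp only [Nat.zero_add] at halt
    rcases Nat.even_or_odd n with hn | hn
    · right; simp [halt (n + 1), Nat.even_add_one, hn]
    · left; simp [halt n, Nat.not_even_iff_odd.2 hn]

lemma exists_prefix_forall_pair [Finite A] (t : ℕ → A) :
    ∃ M, ∀ n, ∃ m, m + 2 ≤ M ∧ t m = t n ∧ t (m + 1) = t (n + 1) := by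
  obtain ⟨M, hM⟩ := Finite.exists_le
    fun p : {p : A × A // ∃ n, (t n, t (n + 1)) = p} => p.2.choose
  refine ⟨M + 2, fun n => ?_⟩
  have hm := (⟨_, n, rfl⟩ : {p : A × A // ∃ n, (t n, t (n + 1)) = p}).2.choose_spec
  simp only [Prod.mk.injEq] at hm
  exact ⟨_, by simpa using hM ⟨_, n, rfl⟩, hm⟩

lemma exists_episturmian_of_finiteEpisturmian [Finite A] {t : ℕ → A}
    (hfac : ∀ u, IsFactorInf t u → FiniteEpisturmian u) {u : List A} (hu : IsFactorInf t u) :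
    ∃ e, Episturmian e ∧ IsFactorInf e u ∧ ∀ n, IsFactorInf e [t n, t (n + 1)] := by
  obtain ⟨i, hi⟩ := hu
  obtain ⟨M, hM⟩ := exists_prefix_forall_pair t
  set L := max M (i + u.length)
  obtain ⟨e, he, hP⟩ := hfac _ (isFactorInf_wordSeg t 0 L)
  refine ⟨e, he, hP.of_infix ?_, fun n => hP.of_infix ?_⟩
  · rw [show u = wordSeg t i u.length from hi]
    exact wordSeg_infix t (by simp [L])
  · obtain ⟨m, hmM, hm, hm'⟩ := hM n
    rw [← hm, ← hm']
    convert wordSeg_infix t (n := 2) (show m + 2 ≤ L by omega) using 1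
    simp [wordSeg, List.range_succ]

lemma exists_isSeparating_of_finiteEpisturmian [Finite A] {t : ℕ → A}
    (hfac : ∀ u, IsFactorInf t u → FiniteEpisturmian u) : ∃ x, IsSeparating x t := by
  obtain ⟨e, he, -, hpairs⟩ :=
    exists_episturmian_of_finiteEpisturmian hfac ⟨0, factorAt_nil t 0⟩
  obtain ⟨x, hx⟩ := he.exists_isSeparating
  exact ⟨x, hx.of_pairs hpairs⟩

lemma Episkew.exists_episturmian_of_isFactorInf [Finite A] {t : ℕ → A} (ht : Episkew t)
    {x : A} (hx : IsSeparating x t) {u : List A} (hu : IsFactorInf t u) :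
    ∃ e, Episturmian e ∧ e 0 = x ∧ IsSeparating x e ∧ IsFactorInf e u := by
  obtain ⟨e, he, heu, hpairs⟩ := exists_episturmian_of_finiteEpisturmian ht.2 hu
  obtain ⟨y, hy⟩ := he.exists_isSeparating
  obtain rfl : y = x := (hy.of_pairs hpairs).eq_of_not_recurrent hx ht.1
  by_cases he0 : e 0 = y
  · exact ⟨e, he, he0, hy, heu⟩
  · have hiff := he.recurrent.isFactorInf_shift_iff
    refine ⟨fun n => e (n + 1), he.of_isFactorInf_iff hiff, (hy 0).resolve_left he0,
      fun n => hy (n + 1), (hiff u).2 heu⟩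

lemma RightSpecial.of_suffix {t : ℕ → A} {u v : List A} (h : RightSpecial t v)
    (huv : u <:+ v) : RightSpecial t u := by
  obtain ⟨a, b, hab, ha, hb⟩ := h
  obtain ⟨p, rfl⟩ := huv
  exact ⟨a, b, hab, ha.of_infix ⟨p, [], by simp⟩, hb.of_infix ⟨p, [], by simp⟩⟩

lemma Episturmian.suffix_of_rightSpecial {t : ℕ → A} (ht : Episturmian t) {u v : List A}
    (hu : RightSpecial t u) (hv : RightSpecial t v) (huv : u.length ≤ v.length) : u <:+ v := by
  have hsuf : v.drop (v.length - u.length) <:+ v := List.drop_suffix _ _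
  rw [ht.2 _ _ hu (hv.of_suffix hsuf) (by simp; omega)]
  exact hsuf

lemma Recurrent.of_consInf {x : A} {t : ℕ → A} (h : Recurrent (consInf x t)) : Recurrent t := by
  rintro u ⟨i, hi⟩ N
  obtain ⟨j, hj, hju⟩ := h u ⟨i + 1, (factorAt_succ_iff fun _ => rfl).2 hi⟩ (N + 1)
  obtain ⟨j, rfl⟩ := Nat.exists_eq_add_of_le' (show 1 ≤ j by omega)
  exact ⟨j, by omega, (factorAt_succ_iff fun _ => rfl).1 hju⟩

lemma IsSeparating.consInf {x : A} {t : ℕ → A} (hx : IsSeparating x t) :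
    IsSeparating x (consInf x t)
  | 0 => Or.inl rfl
  | n + 1 => hx n

lemma Episkew.consInf_of_isSeparating [Finite A] {x : A} {t : ℕ → A} (ht : Episkew t)
    (hx : IsSeparating x t) (ht0 : t 0 ≠ x) : Episkew (consInf x t) := by
  refine ⟨fun h => ht.1 h.of_consInf, ?_⟩
  rintro u ⟨_ | i, hi⟩
  · rcases u with _ | ⟨c, v⟩
    · exact ht.2 [] ⟨0, factorAt_nil t 0⟩
    obtain ⟨rfl, hv⟩ := factorAt_cons.mp hi
    -- `v` is a prefix of `t`, and in `e` an occurrence of `t 0 ≠ x` is preceded by `x`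
    have hvP := wordSeg_prefix t 0 (Nat.le_succ v.length)
    rw [← show v = wordSeg t 0 v.length from (factorAt_succ_iff fun _ => rfl).1 hv] at hvP
    obtain ⟨e, he, he0, hex, j, hj⟩ :=
      ht.exists_episturmian_of_isFactorInf hx (isFactorInf_wordSeg t 0 (v.length + 1))
    have hej : t 0 = e j := by simpa using hj.getElem 0 (by simp)
    obtain ⟨j, rfl⟩ := Nat.exists_eq_add_of_le' (show 1 ≤ j from
      Nat.pos_of_ne_zero fun h0 => ht0 (by rw [hej, h0, he0]))
    have hxj : e j = c := (hex j).resolve_right fun h => ht0 (hej.trans h)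
    exact ⟨e, he, j,
      (factorAt_cons.2 ⟨hxj.symm, hj⟩).of_prefix ((List.prefix_cons_inj c).2 hvP)⟩
  · exact ht.2 u ⟨i, (factorAt_succ_iff fun _ => rfl).1 hi⟩

section Psi

variable [DecidableEq A] (x : A)

@[simp] lemma psiW_nil : psiW x [] = [] := rfl

lemma psiW_cons (c : A) (u : List A) :
    psiW x (c :: u) = (if c = x then [x] else [x, c]) ++ psiW x u := by
  simp [psiW]

lemma psiW_append (u v : List A) : psiW x (u ++ v) = psiW x u ++ psiW x v := by
  simp [psiW]

lemma psiW_singleton (c : A) : psiW x [c] = if c = x then [x] else [x, c] := by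
  simp [psiW]

lemma exists_psiW_append_singleton_eq_cons (u : List A) : ∃ r, psiW x u ++ [x] = x :: r := by
  cases u with
  | nil => exact ⟨[], rfl⟩
  | cons c u => by_cases hc : c = x <;> simp [psiW_cons, hc]

lemma reverse_psiW_append_singleton (u : List A) :
    (psiW x u ++ [x]).reverse = psiW x u.reverse ++ [x] := by
  induction u with
  | nil => simp
  | cons c u ih =>
    rw [psiW_cons, List.append_assoc, List.reverse_append, ih, List.reverse_cons, psiW_append,
      psiW_singleton]
    by_cases hc : c = x <;> simp [hc]

variable {x} in
lemma isPrefix_of_psiW_append_singleton {u v : List A}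
    (h : psiW x u ++ [x] <+: psiW x v ++ [x]) : u <+: v := by
  induction u generalizing v with
  | nil => exact List.nil_prefix
  | cons c u ih =>
    cases v with
    | nil =>
      have hl := h.length_le
      by_cases hc : c = x <;> simp [psiW_cons, hc] at hl
    | cons d v =>
      rw [psiW_cons, psiW_cons, List.append_assoc, List.append_assoc] at h
      obtain ⟨r, hr⟩ := exists_psiW_append_singleton_eq_cons x u
      obtain ⟨r', hr'⟩ := exists_psiW_append_singleton_eq_cons x v
      by_cases hc : c = x <;> by_cases hd : d = x <;>
        simp only [hc, hd, ite_true, ite_false, List.cons_append, List.nil_append,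
          List.cons_prefix_cons, true_and] at h
      · exact List.cons_prefix_cons.mpr ⟨hc.trans hd.symm, ih h⟩
      · rw [hr] at h
        exact absurd (List.cons_prefix_cons.mp h).1.symm hd
      · rw [hr'] at h
        exact absurd (List.cons_prefix_cons.mp h).1 hc
      · exact List.cons_prefix_cons.mpr ⟨h.1, ih h.2⟩

variable {x} in
lemma eq_of_psiW_append_singleton_suffix {u v : List A}
    (h : psiW x u ++ [x] <:+ psiW x v ++ [x]) (huv : u.length = v.length) : u = v := by
  rw [← List.reverse_prefix, reverse_psiW_append_singleton, reverse_psiW_append_singleton] at h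
  simpa using (isPrefix_of_psiW_append_singleton h).eq_of_length (by simpa using huv)

end Psi

section Desubst

variable [DecidableEq A] (x : A) (w : ℕ → A)

/-- Position in `w` of the `k`-th block `x` or `xy` (`y ≠ x`) of the factorisation of `w`
into images of letters under `ψ_x`. -/
def blockStart : ℕ → ℕ
  | 0 => 0
  | k + 1 => blockStart k + if w (blockStart k + 1) = x then 1 else 2

/-- The preimage of `w` under `ψ_x`, read off block by block. -/
def desubst (k : ℕ) : A :=
  if w (blockStart x w k + 1) = x then x else w (blockStart x w k + 1)

variable {x w}

lemma blockStart_succ (k : ℕ) :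
    blockStart x w (k + 1) = blockStart x w k + if w (blockStart x w k + 1) = x then 1 else 2 :=
  rfl

lemma blockStart_strictMono : StrictMono (blockStart x w) :=
  strictMono_nat_of_lt_succ fun k => by rw [blockStart_succ]; split_ifs <;> omega

lemma le_blockStart (k : ℕ) : k ≤ blockStart x w k :=
  blockStart_strictMono.le_apply

lemma exists_blockStart_eq {p : ℕ} (hp : w p = x) : ∃ k, blockStart x w k = p := by
  classical
  have hex : ∃ k, p < blockStart x w (k + 1) :=
    ⟨p, Nat.lt_of_lt_of_le p.lt_succ_self (le_blockStart _)⟩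
  obtain ⟨k, hk, hk'⟩ : ∃ k, blockStart x w k ≤ p ∧ p < blockStart x w (k + 1) := by
    refine ⟨Nat.find hex, ?_, Nat.find_spec hex⟩
    rcases h : Nat.find hex with _ | k
    · exact Nat.zero_le p
    · exact not_lt.1 (Nat.find_min hex (h ▸ k.lt_succ_self))
  refine ⟨k, (Nat.eq_or_lt_of_le hk).resolve_right fun hlt => ?_⟩
  rw [blockStart_succ] at hk'
  split_ifs at hk' with h
  · omega
  · exact h (by rwa [show p = blockStart x w k + 1 by omega] at hp)

lemma factorAt_desubst_of_factorAt_psiW {u : List A} {k : ℕ}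
    (h : FactorAt w (psiW x u ++ [x]) (blockStart x w k)) : FactorAt (desubst x w) u k := by
  induction u generalizing k with
  | nil => exact factorAt_nil _ _
  | cons c u ih =>
    rw [psiW_cons, List.append_assoc, factorAt_append] at h
    obtain ⟨hc, hu⟩ := h
    obtain ⟨r, hr⟩ := exists_psiW_append_singleton_eq_cons x u
    rw [hr] at hu
    rw [factorAt_cons]
    split_ifs at hc hu with hcx
    · have hnext : w (blockStart x w k + 1) = x := ((factorAt_cons.mp hu).1).symm
      refine ⟨by simp [desubst, hnext, hcx], ih ?_⟩
      rwa [blockStart_succ, if_pos hnext, hr]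
    · have hnext : w (blockStart x w k + 1) = c := by
        simp only [factorAt_cons] at hc
        exact hc.2.1.symm
      refine ⟨by simp [desubst, hnext, hcx], ih ?_⟩
      rwa [blockStart_succ, if_neg (hnext ▸ hcx), hr]

lemma IsFactorInf.desubst_of_psiW {u : List A} (h : IsFactorInf w (psiW x u ++ [x])) :
    IsFactorInf (desubst x w) u := by
  obtain ⟨j, hj⟩ := h
  obtain ⟨r, hr⟩ := exists_psiW_append_singleton_eq_cons x u
  obtain ⟨k, rfl⟩ := exists_blockStart_eq ((factorAt_cons.mp (hr ▸ hj)).1.symm)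
  exact ⟨k, factorAt_desubst_of_factorAt_psiW hj⟩

variable (hw0 : w 0 = x) (hx : IsSeparating x w)
include hw0 hx

lemma apply_blockStart (k : ℕ) : w (blockStart x w k) = x := by
  induction k with
  | zero => exact hw0
  | succ k ih =>
    rw [blockStart_succ]
    split_ifs with h
    · exact h
    · exact (hx _).resolve_left h

lemma wordSeg_blockStart (m l : ℕ) :
    wordSeg w (blockStart x w m) (blockStart x w (m + l) - blockStart x w m) =
      psiW x (wordSeg (desubst x w) m l) := by
  induction l with
  | zero => simp
  | succ l ih =>
    have hmn : blockStart x w m ≤ blockStart x w (m + l) :=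
      blockStart_strictMono.monotone (by omega)
    rw [← Nat.add_assoc, blockStart_succ, wordSeg_succ, psiW_append, ← ih, psiW_singleton,
      Nat.sub_add_comm hmn, wordSeg_add, Nat.add_sub_cancel' hmn]
    congr 1
    by_cases h : w (blockStart x w (m + l) + 1) = x
    · simp [h, desubst, wordSeg, apply_blockStart hw0 hx]
    · simp [h, desubst, wordSeg, List.range_succ, apply_blockStart hw0 hx]

lemma isMorphImage_desubst : IsMorphImage (psiW x) (desubst x w) w := by
  intro k
  have h := wordSeg_blockStart hw0 hx 0 k
  rw [IsPrefixInf, prefixList_eq_wordSeg, prefixList_eq_wordSeg, ← h]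
  simp [blockStart]

lemma FactorAt.psiW_desubst {u : List A} {k : ℕ} (h : FactorAt (desubst x w) u k) :
    FactorAt w (psiW x u ++ [x]) (blockStart x w k) := by
  have hseg := wordSeg_blockStart hw0 hx k u.length
  rw [← factorAt_iff_eq_wordSeg.mp h] at hseg
  have hle : blockStart x w k ≤ blockStart x w (k + u.length) :=
    blockStart_strictMono.monotone (by omega)
  rw [factorAt_append, factorAt_iff_eq_wordSeg, ← hseg, wordSeg_length,
    Nat.add_sub_cancel' hle]
  simp [factorAt_cons, apply_blockStart hw0 hx]

lemma IsFactorInf.psiW_desubst {u : List A} (h : IsFactorInf (desubst x w) u) :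
    IsFactorInf w (psiW x u ++ [x]) := by
  obtain ⟨k, hk⟩ := h
  exact ⟨_, hk.psiW_desubst hw0 hx⟩

lemma RightSpecial.psiW_desubst {u : List A} (h : RightSpecial (desubst x w) u) :
    RightSpecial w (psiW x u ++ [x]) := by
  have hlift : ∀ a, IsFactorInf (desubst x w) (u ++ [a]) →
      IsFactorInf w (psiW x u ++ [x] ++ [a]) := by
    intro a ha
    have := ha.psiW_desubst hw0 hx
    rw [psiW_append, psiW_singleton] at this
    split_ifs at this with hax
    · simpa [hax] using this
    · exact this.of_infix ⟨[], [x], by simp⟩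
  obtain ⟨a, b, hab, ha, hb⟩ := h
  exact ⟨a, b, hab, hlift a ha, hlift b hb⟩

lemma Episturmian.desubst (he : Episturmian w) : Episturmian (desubst x w) := by
  refine ⟨fun u hu => ?_, fun u v hu hv huv => ?_⟩
  · have := he.1 _ (hu.psiW_desubst hw0 hx)
    rw [reverse_psiW_append_singleton] at this
    exact this.desubst_of_psiW
  · have hu' := hu.psiW_desubst hw0 hx
    have hv' := hv.psiW_desubst hw0 hx
    rcases le_total (psiW x u ++ [x]).length (psiW x v ++ [x]).length with h | h
    · exact eq_of_psiW_append_singleton_suffix (he.suffix_of_rightSpecial hu' hv' h) huv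
    · exact (eq_of_psiW_append_singleton_suffix (he.suffix_of_rightSpecial hv' hu' h)
        huv.symm).symm

lemma recurrent_of_recurrent_desubst (h : Recurrent (desubst x w)) : Recurrent w := by
  refine recurrent_of_forall_prefix fun k N => ?_
  obtain ⟨m, hm, hkm⟩ := h _ (isFactorInf_wordSeg _ 0 k) N
  have hpre := wordSeg_blockStart hw0 hx 0 k
  simp only [Nat.zero_add, blockStart, Nat.sub_zero] at hpre
  have hocc := hkm.psiW_desubst hw0 hx
  rw [← hpre] at hocc
  refine ⟨blockStart x w m, (le_blockStart m).trans' hm, hocc.of_prefix ?_⟩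
  exact (wordSeg_prefix w 0 (le_blockStart k)).trans (List.prefix_append _ _)

lemma Episkew.desubst [Finite A] (hw : Episkew w) : Episkew (desubst x w) := by
  refine ⟨fun h => hw.1 (recurrent_of_recurrent_desubst hw0 hx h), fun u hu => ?_⟩
  obtain ⟨e, he, he0, hex, hψu⟩ :=
    hw.exists_episturmian_of_isFactorInf hx (hu.psiW_desubst hw0 hx)
  exact ⟨_, he.desubst he0 hex, hψu.desubst_of_psiW⟩

end Desubst

lemma Episkew.exists_psiW_preimage [Finite A] [DecidableEq A] {t : ℕ → A} (ht : Episkew t) :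
    ∃ x s, Episkew s ∧ IsMorphImage (psiW x) s (if t 0 = x then t else consInf x t) := by
  obtain ⟨x, hx⟩ := exists_isSeparating_of_finiteEpisturmian ht.2
  refine ⟨x, ?_⟩
  split_ifs with ht0
  · exact ⟨_, ht.desubst ht0 hx, isMorphImage_desubst ht0 hx⟩
  · exact ⟨_, (ht.consInf_of_isSeparating hx ht0).desubst rfl hx.consInf,
      isMorphImage_desubst rfl hx.consInf⟩

end

theorem episkew_decomposition_general {A : Type*} [Fintype A] [DecidableEq A] (t : ℕ → A)
    (hrec : ¬ Recurrent t) (hfac : ∀ u, IsFactorInf t u → FiniteEpisturmian u) :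
    ∃ (ts : ℕ → ℕ → A) (x : ℕ → A),
      ts 0 = t ∧ (∀ i, ¬ Recurrent (ts i)) ∧
      ∀ i : ℕ, IsMorphImage (psiW (x (i + 1))) (ts (i + 1))
        (if ts i 0 = x (i + 1) then ts i else consInf (x (i + 1)) (ts i)) := by
  choose X S hS hXS using fun s : {s : ℕ → A // Episkew s} => s.2.exists_psiW_preimage
  let seq : ℕ → {s : ℕ → A // Episkew s} :=
    fun n => n.rec ⟨t, hrec, hfac⟩ fun _ s => ⟨S s, hS s⟩
  exact ⟨fun i => (seq i).1, fun i => X (seq (i - 1)), rfl, fun i => (seq i).2.1,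
    fun i => hXS (seq i)⟩

/-- If `t` is a non-recurrent infinite word with `Alph(t) = A` all of whose
factors are finite episturmian, then there exist non-recurrent infinite words `t⁽ⁱ⁾` and
letters `x₁, x₂, …` with `t⁽⁰⁾ = t` and `t'⁽ⁱ⁻¹⁾ = ψ_{xᵢ}(t⁽ⁱ⁾)`, where `t'⁽ⁱ⁻¹⁾ = t⁽ⁱ⁻¹⁾`
if `t⁽ⁱ⁻¹⁾` begins with `xᵢ` and `t'⁽ⁱ⁻¹⁾ = xᵢ·t⁽ⁱ⁻¹⁾` otherwise. -/
theorem episkew_decomposition {A : Type*} [Fintype A] [DecidableEq A] (t : ℕ → A)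
    (hAlph : ∀ a : A, ∃ n, t n = a)
    (hrec : ¬ Recurrent t) (hfac : ∀ u, IsFactorInf t u → FiniteEpisturmian u) :
    ∃ (ts : ℕ → ℕ → A) (x : ℕ → A),
      ts 0 = t ∧ (∀ i, ¬ Recurrent (ts i)) ∧
      ∀ i : ℕ, IsMorphImage (psiW (x (i + 1))) (ts (i + 1))
        (if ts i 0 = x (i + 1) then ts i else consInf (x (i + 1)) (ts i)) :=
  episkew_decomposition_general t hrec hfac
end
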